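/- Let (P, N) be a multi-pointed category where P has weak finite limits and weak N-kernels, and let C be the regular completion of P. Then (C, N^C) is star-regular if and only if every internal reflexive graph in (P, N) satisfies (∗π₀). -/

import Mathlib

/-!
(⇒) For a reflexive graph `d, c : G₁ ⇉ G₀` in `P`, the split epimorphism `d` is regular, so by
star-regularity it is the coequalizer of the star of its kernel pair. That star is covered by
`P`-objects whose composite with `d` lies in `N`, and these factor through the weak `N`-kernel of
`d`; hence a `g` with `k ≫ d ≫ g = k ≫ c ≫ g` makes `c ≫ g` coequalize the star, so
`c ≫ g = d ≫ h`, and precomposing with the common section gives `h = g`.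

(⇐) An `N^C`-kernel of `f` is the image of a weak `N`-kernel computed on a `P`-cover of the
pullback of `f` along a `P`-cover of its codomain. For the star condition, cover the kernel pair
of a regular epimorphism by a reflexive graph in `P`: its weak `N`-kernel factors through the
star, so a map coequalizing the star is equalized on that weak kernel, hence by (∗π₀), tested
on the `P`-objects into which its codomain embeds, on the whole graph and so on the kernel pair.
-/

open CategoryTheory CategoryTheory.Limits

universe v u

variable {C : Type u} [Category.{v} C]

/-- A class of morphisms of a category. -/
abbrev MorClass (C : Type u) [Category.{v} C] :=
  ∀ ⦃X Y : C⦄, (X ⟶ Y) → Prop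

/-- An ideal of morphisms: closed under pre- and post-composition with arbitrary morphisms. -/
def IsMorIdeal (N : MorClass C) : Prop :=
  (∀ ⦃X Y Z : C⦄ (f : X ⟶ Y) (g : Y ⟶ Z), N g → N (f ≫ g)) ∧
  (∀ ⦃X Y Z : C⦄ (f : X ⟶ Y) (g : Y ⟶ Z), N f → N (f ≫ g))

/-- `k` is a weak `N`-kernel of `f`. -/
def IsWeakKernel (N : MorClass C) {K X Y : C} (f : X ⟶ Y) (k : K ⟶ X) : Prop :=
  N (k ≫ f) ∧ ∀ ⦃K' : C⦄ (k' : K' ⟶ X), N (k' ≫ f) → ∃ u : K' ⟶ K, u ≫ k = k'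

/-- `k` is an `N`-kernel of `f` (unique factorization). -/
def IsNKernel (N : MorClass C) {K X Y : C} (f : X ⟶ Y) (k : K ⟶ X) : Prop :=
  N (k ≫ f) ∧ ∀ ⦃K' : C⦄ (k' : K' ⟶ X), N (k' ≫ f) → ∃! u : K' ⟶ K, u ≫ k = k'

def HasWeakKernels (N : MorClass C) : Prop :=
  ∀ ⦃X Y : C⦄ (f : X ⟶ Y), ∃ (K : C) (k : K ⟶ X), IsWeakKernel N f k

def HasNKernels (N : MorClass C) : Prop :=
  ∀ ⦃X Y : C⦄ (f : X ⟶ Y), ∃ (K : C) (k : K ⟶ X), IsNKernel N f k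

/-- The condition (∗π₀) for a pair of parallel morphisms: for a weak `N`-kernel `k` of `f₁`
and any morphism `g`, `g f₁ k = g f₂ k ⟺ g f₁ = g f₂`. -/
def StarPi0 (N : MorClass C) {X Y : C} (f₁ f₂ : X ⟶ Y) : Prop :=
  ∀ ⦃K : C⦄ (k : K ⟶ X), IsWeakKernel N f₁ k →
    ∀ ⦃Z : C⦄ (g : Y ⟶ Z), (k ≫ f₁ ≫ g = k ≫ f₂ ≫ g ↔ f₁ ≫ g = f₂ ≫ g)

/-- `(u, v)` is a weak kernel pair of `f`. -/
def IsWeakKernelPair {P X Y : C} (f : X ⟶ Y) (u v : P ⟶ X) : Prop :=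
  u ≫ f = v ≫ f ∧ ∀ ⦃Q : C⦄ (u' v' : Q ⟶ X), u' ≫ f = v' ≫ f →
    ∃ w : Q ⟶ P, w ≫ u = u' ∧ w ≫ v = v'

/-- `(u, v)` is the kernel pair of `f`. -/
def IsKernelPairOf {P X Y : C} (f : X ⟶ Y) (u v : P ⟶ X) : Prop :=
  u ≫ f = v ≫ f ∧ ∀ ⦃Q : C⦄ (u' v' : Q ⟶ X), u' ≫ f = v' ≫ f →
    ∃! w : Q ⟶ P, w ≫ u = u' ∧ w ≫ v = v'

def HasWeakKernelPairs (C : Type u) [Category.{v} C] : Prop :=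
  ∀ ⦃X Y : C⦄ (f : X ⟶ Y), ∃ (P : C) (u v : P ⟶ X), IsWeakKernelPair f u v

def HasKernelPairs (C : Type u) [Category.{v} C] : Prop :=
  ∀ ⦃X Y : C⦄ (f : X ⟶ Y), ∃ (P : C) (u v : P ⟶ X), IsKernelPairOf f u v

/-- `f` is a coequalizer of the pair `(u, v)`. -/
def IsCoequalizerOf {P X Y : C} (u v : P ⟶ X) (f : X ⟶ Y) : Prop :=
  u ≫ f = v ≫ f ∧ ∀ ⦃Z : C⦄ (g : X ⟶ Z), u ≫ g = v ≫ g → ∃! h : Y ⟶ Z, f ≫ h = g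

/-- `f` is a regular epimorphism: a coequalizer of some pair. -/
def IsRegEpi {X Y : C} (f : X ⟶ Y) : Prop :=
  ∃ (P : C) (u v : P ⟶ X), IsCoequalizerOf u v f

/-- `(p₁, p₂)` is a pullback of `(f, g)`. -/
def IsPullbackSq {P X Y Z : C} (p₁ : P ⟶ X) (p₂ : P ⟶ Y) (f : X ⟶ Z) (g : Y ⟶ Z) : Prop :=
  p₁ ≫ f = p₂ ≫ g ∧ ∀ ⦃Q : C⦄ (q₁ : Q ⟶ X) (q₂ : Q ⟶ Y), q₁ ≫ f = q₂ ≫ g →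
    ∃! w : Q ⟶ P, w ≫ p₁ = q₁ ∧ w ≫ p₂ = q₂

/-- A regular category: finitely complete, kernel pairs have coequalizers, and
regular epimorphisms are stable under pullback. -/
structure IsRegularCat (C : Type u) [Category.{v} C] : Prop where
  hasFiniteLimits : HasFiniteLimits C
  coeqOfKernelPairs : ∀ ⦃P X Y : C⦄ (f : X ⟶ Y) (u v : P ⟶ X), IsKernelPairOf f u v →
    ∃ (Q : C) (q : X ⟶ Q), IsCoequalizerOf u v q
  regEpiStable : ∀ ⦃P X Y Z : C⦄ (p₁ : P ⟶ X) (p₂ : P ⟶ Y) (f : X ⟶ Z) (g : Y ⟶ Z),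
    IsPullbackSq p₁ p₂ f g → IsRegEpi g → IsRegEpi p₁

/-- `P` (a class of objects, regarded as a full subcategory) is a projective cover of `C`. -/
structure IsProjectiveCover (P : Set C) : Prop where
  proj : ∀ ⦃X : C⦄, X ∈ P → ∀ ⦃A B : C⦄ (e : A ⟶ B), IsRegEpi e →
    ∀ f : X ⟶ B, ∃ g : X ⟶ A, g ≫ e = f
  covers : ∀ X : C, ∃ (Q : C) (_ : Q ∈ P) (e : Q ⟶ X), IsRegEpi e

/-- An ideal of the full subcategory on `P`, encoded as a class of morphisms of `C`
supported on `P`-objects and closed under composition with `P`-morphisms. -/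
def IsMorIdealOn (P : Set C) (N : MorClass C) : Prop :=
  (∀ ⦃X Y : C⦄ (f : X ⟶ Y), N f → X ∈ P ∧ Y ∈ P) ∧
  (∀ ⦃X Y Z : C⦄ (f : X ⟶ Y) (g : Y ⟶ Z), X ∈ P → N g → N (f ≫ g)) ∧
  (∀ ⦃X Y Z : C⦄ (f : X ⟶ Y) (g : Y ⟶ Z), Z ∈ P → N f → N (f ≫ g))

/-- The extension `N^C` of an ideal `N` of the full subcategory `P` to `C`. -/
def extClass (P : Set C) (N : MorClass C) : MorClass C := fun X Y f =>
  ∃ (A B : C) (_ : A ∈ P) (_ : B ∈ P) (n : A ⟶ B) (e : A ⟶ X) (e' : B ⟶ Y),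
    IsRegEpi e ∧ IsRegEpi e' ∧ N n ∧ e ≫ f = n ≫ e'

/-- The restriction `M_P` of an ideal `M` of `C` to the full subcategory `P`. -/
def restClass (P : Set C) (M : MorClass C) : MorClass C := fun X Y f =>
  X ∈ P ∧ Y ∈ P ∧ M f

/-- `k` is a weak `N`-kernel of `f` computed in the full subcategory `P`. -/
def IsWeakKernelOn (P : Set C) (N : MorClass C) {K X Y : C} (f : X ⟶ Y) (k : K ⟶ X) : Prop :=
  K ∈ P ∧ N (k ≫ f) ∧ ∀ ⦃K' : C⦄, K' ∈ P → ∀ k' : K' ⟶ X, N (k' ≫ f) →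
    ∃ u : K' ⟶ K, u ≫ k = k'

def HasWeakKernelsOn (P : Set C) (N : MorClass C) : Prop :=
  ∀ ⦃X Y : C⦄, X ∈ P → Y ∈ P → ∀ f : X ⟶ Y, ∃ (K : C) (k : K ⟶ X), IsWeakKernelOn P N f k

/-- The condition (∗π₀) interpreted in the full subcategory `P`. -/
def StarPi0On (P : Set C) (N : MorClass C) {X Y : C} (f₁ f₂ : X ⟶ Y) : Prop :=
  ∀ ⦃K : C⦄ (k : K ⟶ X), IsWeakKernelOn P N f₁ k →
    ∀ ⦃Z : C⦄, Z ∈ P → ∀ g : Y ⟶ Z, (k ≫ f₁ ≫ g = k ≫ f₂ ≫ g ↔ f₁ ≫ g = f₂ ≫ g)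

/-- Every internal reflexive graph of `C` satisfies (∗π₀). -/
def ReflGraphsStarPi0 (N : MorClass C) : Prop :=
  ∀ ⦃G₁ G₀ : C⦄ (d c : G₁ ⟶ G₀) (e : G₀ ⟶ G₁), e ≫ d = 𝟙 G₀ → e ≫ c = 𝟙 G₀ →
    StarPi0 N d c

/-- Every internal reflexive graph of the full subcategory `P` satisfies (∗π₀). -/
def ReflGraphsStarPi0On (P : Set C) (N : MorClass C) : Prop :=
  ∀ ⦃G₁ G₀ : C⦄, G₁ ∈ P → G₀ ∈ P → ∀ (d c : G₁ ⟶ G₀) (e : G₀ ⟶ G₁),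
    e ≫ d = 𝟙 G₀ → e ≫ c = 𝟙 G₀ → StarPi0On P N d c

/-- Every regular epimorphism is a coequalizer of its kernel star (star-regularity condition). -/
def RegEpisCoeqOfKernelStar (N : MorClass C) : Prop :=
  ∀ ⦃X Y : C⦄ (f : X ⟶ Y), IsRegEpi f →
    ∀ ⦃P : C⦄ (u v : P ⟶ X), IsKernelPairOf f u v →
      ∀ ⦃K : C⦄ (k : K ⟶ P), IsNKernel N u k →
        IsCoequalizerOf (k ≫ u) (k ≫ v) f

/-- `f` is `N`-saturating. -/
def IsSaturating (N : MorClass C) {P' Y : C} (f : P' ⟶ Y) : Prop :=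
  ∀ ⦃X : C⦄ (n : X ⟶ Y), N n →
    ∃ (Z : C) (g : Z ⟶ X) (m : Z ⟶ P'), IsRegEpi g ∧ N m ∧ m ≫ f = g ≫ n

/-- `C` is a regular completion of `P`: `P` is a projective cover and every object of `C`
admits a monomorphism into a finite product of `P`-objects (expressed via a jointly monic
finite family). -/
def IsRegularCompletionOf (P : Set C) : Prop :=
  IsProjectiveCover P ∧
    ∀ X : C, ∃ (n : ℕ) (obj : Fin n → C) (_ : ∀ i, obj i ∈ P) (m : ∀ i, X ⟶ obj i),
      ∀ ⦃W : C⦄ (a b : W ⟶ X), (∀ i, a ≫ m i = b ≫ m i) → a = b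

/-- `C` is pointed via the ideal `N` of null morphisms. -/
def IsPointedVia (N : MorClass C) : Prop :=
  IsMorIdeal N ∧ ∀ X Y : C, ∃! f : X ⟶ Y, N f

/-- The full subcategory `P` is pointed via the ideal `N` of null morphisms. -/
def IsPointedOn (P : Set C) (N : MorClass C) : Prop :=
  IsMorIdealOn P N ∧ ∀ ⦃X Y : C⦄, X ∈ P → Y ∈ P → ∃! f : X ⟶ Y, N f

/-- `f` is a normal epimorphism (a cokernel) with respect to the ideal `N`. -/
def IsNormalEpi (N : MorClass C) {X Y : C} (f : X ⟶ Y) : Prop :=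
  ∃ (A : C) (h : A ⟶ X), N (h ≫ f) ∧
    ∀ ⦃Z : C⦄ (g : X ⟶ Z), N (h ≫ g) → ∃! t : Y ⟶ Z, f ≫ t = g

/-- The full subcategory `P` has weak finite limits. -/
def HasWeakFiniteLimitsOn (P : Set C) : Prop :=
  ∀ (J : Type) [SmallCategory J] [FinCategory J]
    (F : J ⥤ ObjectProperty.FullSubcategory (fun X => X ∈ P)),
    ∃ c : Cone F, ∀ c' : Cone F, Nonempty (c' ⟶ c)


theorem isCoequalizerOf_iff_nonempty_isColimit {R X Y : C} {u v : R ⟶ X} {f : X ⟶ Y}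
    (w : u ≫ f = v ≫ f) :
    IsCoequalizerOf u v f ↔ Nonempty (IsColimit (Cofork.ofπ f w)) := by
  refine ⟨fun h => ⟨Cofork.IsColimit.mk' _ fun s => ?_⟩,
    fun ⟨hc⟩ => ⟨w, fun _ g hg => Cofork.IsColimit.existsUnique hc g hg⟩⟩
  have hs := h.2 s.π s.condition
  exact ⟨hs.exists.choose, hs.exists.choose_spec, fun hm => hs.unique hm hs.exists.choose_spec⟩

theorem isRegEpi_iff_isRegularEpi {X Y : C} (f : X ⟶ Y) : IsRegEpi f ↔ IsRegularEpi f :=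
  ⟨fun ⟨_, u, v, h⟩ =>
    ⟨⟨⟨_, u, v, h.1, ((isCoequalizerOf_iff_nonempty_isColimit h.1).1 h).some⟩⟩⟩,
  fun ⟨⟨r⟩⟩ =>
    ⟨r.W, r.left, r.right, (isCoequalizerOf_iff_nonempty_isColimit r.w).2 ⟨r.isColimit⟩⟩⟩

theorem isRegEpi_id (X : C) : IsRegEpi (𝟙 X) :=
  (isRegEpi_iff_isRegularEpi _).2 inferInstance

theorem IsRegEpi.strongEpi {X Y : C} {f : X ⟶ Y} (hf : IsRegEpi f) : StrongEpi f :=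
  have := (isRegEpi_iff_isRegularEpi f).1 hf
  inferInstance

theorem IsRegEpi.epi {X Y : C} {f : X ⟶ Y} (hf : IsRegEpi f) : Epi f :=
  hf.strongEpi.epi

theorem IsRegEpi.isCoequalizerOf_of_isKernelPairOf {X Y R : C} {f : X ⟶ Y} (hf : IsRegEpi f)
    {u v : R ⟶ X} (kp : IsKernelPairOf f u v) : IsCoequalizerOf u v f := by
  obtain ⟨_, s, t, hst, hco⟩ := hf
  refine ⟨kp.1, fun _ g hg => hco g ?_⟩
  obtain ⟨w, ⟨rfl, rfl⟩, -⟩ := kp.2 s t hst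
  simp only [Category.assoc, hg]

theorem isPullbackSq_iff_isPullback {Q X Y Z : C} (p₁ : Q ⟶ X) (p₂ : Q ⟶ Y) (f : X ⟶ Z)
    (g : Y ⟶ Z) : IsPullbackSq p₁ p₂ f g ↔ IsPullback p₁ p₂ f g := by
  refine ⟨fun h => IsPullback.mk' h.1 (fun _ a b ha hb => ?_)
      fun _ a b hab => (h.2 a b hab).exists,
    fun h => ⟨h.w, fun _ a b hab => ⟨h.lift a b hab, by simp,
      fun l hl => h.hom_ext (by simp [hl.1]) (by simp [hl.2])⟩⟩⟩
  exact (h.2 (b ≫ p₁) (b ≫ p₂) (by rw [Category.assoc, Category.assoc, h.1])).unique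
    ⟨ha, hb⟩ ⟨rfl, rfl⟩

theorem IsRegularCat.regular (hC : IsRegularCat C) : Regular C where
  toHasFiniteLimits := hC.hasFiniteLimits
  hasCoequalizer_of_isKernelPair {_ _ _ f _ _} hkp := by
    obtain ⟨_, _, hq⟩ :=
      hC.coeqOfKernelPairs f _ _ ((isPullbackSq_iff_isPullback _ _ _ _).2 hkp)
    exact ⟨⟨⟨_, ((isCoequalizerOf_iff_nonempty_isColimit hq.1).1 hq).some⟩⟩⟩
  regularEpiIsStableUnderBaseChange := ⟨fun {_ _ _ _ f g f' g'} sq hg => by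
    simp only [MorphismProperty.regularEpi_iff, ← isRegEpi_iff_isRegularEpi] at hg ⊢
    exact hC.regEpiStable g' f' f g ((isPullbackSq_iff_isPullback _ _ _ _).2 sq.flip) hg⟩

theorem IsRegularCat.exists_isKernelPairOf (hC : IsRegularCat C) {X Y : C} (f : X ⟶ Y) :
    ∃ (R : C) (u v : R ⟶ X), IsKernelPairOf f u v :=
  have := hC.hasFiniteLimits
  ⟨_, _, _, (isPullbackSq_iff_isPullback _ _ _ _).2 (IsPullback.of_hasPullback f f)⟩

section RegularCompletion

variable {P : Set C} {N : MorClass C}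

theorem extClass_of_mem (hN : IsMorIdealOn P N) {A B : C} {n : A ⟶ B} (hn : N n) :
    extClass P N n :=
  ⟨A, B, (hN.1 n hn).1, (hN.1 n hn).2, n, 𝟙 A, 𝟙 B, isRegEpi_id A, isRegEpi_id B, hn, by simp⟩

theorem extClass_precomp (hP : IsProjectiveCover P) (hN : IsMorIdealOn P N) {X Y Z : C}
    (f : X ⟶ Y) {g : Y ⟶ Z} (hg : extClass P N g) : extClass P N (f ≫ g) := by
  obtain ⟨A, B, hA, hB, n, e, e', he, he', hn, hsq⟩ := hg
  obtain ⟨A₀, hA₀, c, hc⟩ := hP.covers X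
  obtain ⟨t, ht⟩ := hP.proj hA₀ e he (c ≫ f)
  refine ⟨A₀, B, hA₀, hB, t ≫ n, c, e', hc, he', hN.2.1 t n hA₀ hn, ?_⟩
  rw [← Category.assoc, ← ht, Category.assoc, hsq, Category.assoc]

theorem extClass_postcomp (hP : IsProjectiveCover P) (hN : IsMorIdealOn P N) {X Y Z : C}
    {g : X ⟶ Y} (hg : extClass P N g) (f : Y ⟶ Z) : extClass P N (g ≫ f) := by
  obtain ⟨A, B, hA, hB, n, e, e', he, he', hn, hsq⟩ := hg
  obtain ⟨B₀, hB₀, z, hz⟩ := hP.covers Z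
  obtain ⟨s, hs⟩ := hP.proj hB z hz (e' ≫ f)
  refine ⟨A, B₀, hA, hB₀, n ≫ s, e, z, he, hz, hN.2.2 n s hB₀ hn, ?_⟩
  rw [← Category.assoc, hsq, Category.assoc, ← hs, Category.assoc]

theorem extClass_of_regEpi_comp (hP : IsProjectiveCover P) (hN : IsMorIdealOn P N) {A X Y : C}
    (hA : A ∈ P) {e : A ⟶ X} (he : IsRegEpi e) {f : X ⟶ Y} (h : extClass P N (e ≫ f)) :
    extClass P N f := by
  obtain ⟨A₀, B₀, -, hB₀, n, e₀, e₀', he₀, he₀', hn, hsq⟩ := h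
  obtain ⟨s, hs⟩ := hP.proj hA e₀ he₀ (𝟙 A)
  refine ⟨A, B₀, hA, hB₀, s ≫ n, e, e₀', he, he₀', hN.2.1 s n hA hn, ?_⟩
  rw [Category.assoc, ← hsq, ← Category.assoc, hs, Category.id_comp]

theorem exists_eq_comp_of_extClass (hP : IsProjectiveCover P) (hN : IsMorIdealOn P N)
    {A B Y : C} (hA : A ∈ P) (hB : B ∈ P) {b : B ⟶ Y} (hb : IsRegEpi b) {f : A ⟶ Y}
    (hf : extClass P N f) : ∃ n : A ⟶ B, N n ∧ f = n ≫ b := by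
  obtain ⟨A₀, B₀, -, hB₀, n, e₀, e₀', he₀, -, hn, hsq⟩ := hf
  obtain ⟨s, hs⟩ := hP.proj hA e₀ he₀ (𝟙 A)
  obtain ⟨t, rfl⟩ := hP.proj hB₀ b hb e₀'
  refine ⟨s ≫ n ≫ t, hN.2.1 s (n ≫ t) hA (hN.2.2 n t hB hn), ?_⟩
  rw [← Category.id_comp f, ← hs]
  simp only [Category.assoc, hsq]

theorem mem_of_extClass (hP : IsProjectiveCover P) (hN : IsMorIdealOn P N) {A B : C}
    (hA : A ∈ P) (hB : B ∈ P) {f : A ⟶ B} (hf : extClass P N f) : N f := by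
  obtain ⟨n, hn, rfl⟩ := exists_eq_comp_of_extClass hP hN hA hB (isRegEpi_id B) hf
  simpa using hn

theorem hasNKernels_extClass (hC : IsRegularCat C) (hP : IsProjectiveCover P)
    (hN : IsMorIdealOn P N) (hwk : HasWeakKernelsOn P N) :
    HasNKernels (extClass P N) := by
  have := hC.regular
  intro X Y f
  obtain ⟨B, hB, b, hb⟩ := hP.covers Y
  obtain ⟨D, hD, d, hd⟩ := hP.covers (pullback f b)
  obtain ⟨K, κ, hK, hκN, hκ⟩ := hwk hD hB (d ≫ pullback.snd f b)
  let F := Regular.strongEpiMonoFactorisation (κ ≫ d ≫ pullback.fst f b)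
  have hFe : IsRegEpi F.e := (isRegEpi_iff_isRegularEpi _).2 inferInstance
  refine ⟨F.I, F.m, ?_, fun W k hk => ?_⟩
  · refine extClass_of_regEpi_comp hP hN hK hFe ?_
    have hcomm : F.e ≫ F.m ≫ f = (κ ≫ d ≫ pullback.snd f b) ≫ b := by
      simp [reassoc_of% F.fac, pullback.condition]
    rw [hcomm]
    exact extClass_postcomp hP hN (extClass_of_mem hN hκN) b
  · obtain ⟨W₀, hW₀, c, hc⟩ := hP.covers W
    obtain ⟨n, hn, hcn⟩ :=
      exists_eq_comp_of_extClass hP hN hW₀ hB hb (extClass_precomp hP hN c hk)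
    obtain ⟨t, ht⟩ := hP.proj hW₀ d hd (pullback.lift (c ≫ k) n (by simpa using hcn))
    obtain ⟨w, hw⟩ := hκ hW₀ t (by rwa [← Category.assoc, ht, pullback.lift_snd])
    have hsq : CommSq (w ≫ F.e) c F.m k := ⟨by
      rw [Category.assoc, F.fac, reassoc_of% hw, reassoc_of% ht, pullback.lift_fst]⟩
    have := hc.strongEpi
    exact ⟨hsq.lift, hsq.fac_right,
      fun l hl => (cancel_mono F.m).1 (hl.trans hsq.fac_right.symm)⟩

theorem reflGraphsStarPi0On_of_regEpisCoeqOfKernelStar (hC : IsRegularCat C)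
    (hP : IsProjectiveCover P) (hN : IsMorIdealOn P N)
    (hK : HasNKernels (extClass P N)) (hstar : RegEpisCoeqOfKernelStar (extClass P N)) :
    ReflGraphsStarPi0On P N := by
  intro G₁ G₀ _ hG₀ d c e hed hec K k hk Z _ g
  refine ⟨fun hkg => ?_, fun hg => by rw [hg]⟩
  have hfac : ∀ ⦃W : C⦄, W ∈ P → ∀ γ : W ⟶ G₁, extClass P N (γ ≫ d) →
      γ ≫ d ≫ g = γ ≫ c ≫ g := by
    intro W hW γ hγ
    obtain ⟨u, rfl⟩ := hk.2.2 hW γ (mem_of_extClass hP hN hW hG₀ hγ)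
    simp only [Category.assoc, hkg]
  have hd : IsRegEpi d :=
    have : IsSplitEpi d := ⟨⟨⟨e, hed⟩⟩⟩
    (isRegEpi_iff_isRegularEpi d).2 inferInstance
  obtain ⟨R, p₁, p₂, kp⟩ := hC.exists_isKernelPairOf d
  obtain ⟨S, κ, hκ⟩ := hK p₁
  obtain ⟨W, hW, w, hw⟩ := hP.covers S
  have hwd : extClass P N ((w ≫ κ ≫ p₁) ≫ d) := by
    simpa only [Category.assoc] using extClass_precomp hP hN w (extClass_postcomp hP hN hκ.1 d)
  have hp : (w ≫ κ ≫ p₁) ≫ d = (w ≫ κ ≫ p₂) ≫ d := by simp only [Category.assoc, kp.1]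
  have hstar_cg : (κ ≫ p₁) ≫ c ≫ g = (κ ≫ p₂) ≫ c ≫ g := by
    have := hw.epi
    rw [← cancel_epi w]
    calc w ≫ (κ ≫ p₁) ≫ c ≫ g = (w ≫ κ ≫ p₁) ≫ c ≫ g := by simp only [Category.assoc]
      _ = (w ≫ κ ≫ p₁) ≫ d ≫ g := (hfac hW _ hwd).symm
      _ = (w ≫ κ ≫ p₂) ≫ d ≫ g := by simpa only [Category.assoc] using congrArg (· ≫ g) hp
      _ = (w ≫ κ ≫ p₂) ≫ c ≫ g := hfac hW _ (hp ▸ hwd)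
      _ = w ≫ (κ ≫ p₂) ≫ c ≫ g := by simp only [Category.assoc]
  obtain ⟨h, hh, -⟩ := (hstar d hd p₁ p₂ kp κ hκ).2 (c ≫ g) hstar_cg
  have hhg : h = g := by
    rw [← Category.id_comp h, ← hed, Category.assoc, hh, ← Category.assoc, hec, Category.id_comp]
  rwa [hhg] at hh

theorem exists_reflGraph_cover (hC : IsRegularCat C) (hP : IsProjectiveCover P)
    {R X : C} {u v : R ⟶ X} {δ : X ⟶ R} (hu : δ ≫ u = 𝟙 X) (hv : δ ≫ v = 𝟙 X) :
    ∃ (A₁ A₀ : C) (_ : A₁ ∈ P) (_ : A₀ ∈ P) (d c : A₁ ⟶ A₀) (e : A₀ ⟶ A₁) (a : A₀ ⟶ X)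
      (ρ : A₁ ⟶ R), e ≫ d = 𝟙 A₀ ∧ e ≫ c = 𝟙 A₀ ∧ Epi ρ ∧ ρ ≫ u = d ≫ a ∧ ρ ≫ v = c ≫ a := by
  have := hC.regular
  obtain ⟨A₀, hA₀, a, ha⟩ := hP.covers X
  have := (isRegEpi_iff_isRegularEpi a).1 ha
  let π₁ := pullback.fst u a
  let π₂ := pullback.fst (π₁ ≫ v) a
  obtain ⟨A₁, hA₁, a₁, ha₁⟩ := hP.covers (pullback (π₁ ≫ v) a)
  let s : A₀ ⟶ pullback (π₁ ≫ v) a :=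
    pullback.lift (pullback.lift (a ≫ δ) (𝟙 A₀) (by simp [hu])) (𝟙 A₀)
      (by simp [π₁, pullback.lift_fst_assoc, hv])
  obtain ⟨e, he⟩ := hP.proj hA₀ a₁ ha₁ s
  have := ha₁.epi
  refine ⟨A₁, A₀, hA₁, hA₀, a₁ ≫ π₂ ≫ pullback.snd u a, a₁ ≫ pullback.snd (π₁ ≫ v) a, e, a,
    a₁ ≫ π₂ ≫ π₁, ?_, ?_, inferInstance, ?_, ?_⟩
  · simp [reassoc_of% he, s, π₂, pullback.lift_fst_assoc, pullback.lift_snd]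
  · simp [reassoc_of% he, s, pullback.lift_snd]
  · simp [π₁, pullback.condition]
  · simp [π₂, pullback.condition]

theorem StarPi0On.comp_eq_comp (hP : IsRegularCompletionOf P) {X Y K W : C} {d c : X ⟶ Y}
    (h : StarPi0On P N d c) {k : K ⟶ X} (hk : IsWeakKernelOn P N d k) (g : Y ⟶ W)
    (hkg : k ≫ d ≫ g = k ≫ c ≫ g) : d ≫ g = c ≫ g := by
  obtain ⟨_, obj, hobj, m, hm⟩ := hP.2 W
  refine hm _ _ fun i => ?_
  simpa only [Category.assoc] using
    (h k hk (hobj i) (g ≫ m i)).1 (by simp only [← Category.assoc, hkg])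

theorem regEpisCoeqOfKernelStar_of_reflGraphsStarPi0On (hC : IsRegularCat C)
    (hP : IsRegularCompletionOf P) (hN : IsMorIdealOn P N)
    (hwk : HasWeakKernelsOn P N) (hpi : ReflGraphsStarPi0On P N) :
    RegEpisCoeqOfKernelStar (extClass P N) := by
  intro X Y f hf R u v kp K κ hκ
  refine ⟨by simp only [Category.assoc, kp.1], fun W g hg => ?_⟩
  refine (hf.isCoequalizerOf_of_isKernelPairOf kp).2 g ?_
  obtain ⟨δ, ⟨hδu, hδv⟩, -⟩ := kp.2 (𝟙 X) (𝟙 X) rfl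
  obtain ⟨A₁, A₀, hA₁, hA₀, d, c, e, a, ρ, hed, hec, hρ, hρu, hρv⟩ :=
    exists_reflGraph_cover hC hP.1 hδu hδv
  obtain ⟨L, l, hl⟩ := hwk hA₁ hA₀ d
  obtain ⟨t, ht, -⟩ := hκ.2 (l ≫ ρ) <| by
    rw [Category.assoc, hρu, ← Category.assoc]
    exact extClass_postcomp hP.1 hN (extClass_of_mem hN hl.2.1) a
  have hlg : l ≫ d ≫ a ≫ g = l ≫ c ≫ a ≫ g :=
    calc l ≫ d ≫ a ≫ g = t ≫ κ ≫ u ≫ g := by rw [← reassoc_of% hρu, ← reassoc_of% ht]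
      _ = t ≫ κ ≫ v ≫ g := by simpa only [Category.assoc] using t ≫= hg
      _ = l ≫ c ≫ a ≫ g := by rw [reassoc_of% ht, reassoc_of% hρv]
  have hdg := (hpi hA₁ hA₀ d c e hed hec).comp_eq_comp hP hl (a ≫ g) hlg
  rw [← cancel_epi ρ, reassoc_of% hρu, reassoc_of% hρv, hdg]

end RegularCompletion

theorem statement14_general (hC : IsRegularCat C) (P : Set C) (hP : IsRegularCompletionOf P)
    (N : MorClass C) (hN : IsMorIdealOn P N) (hwk : HasWeakKernelsOn P N) :
    (HasNKernels (extClass P N) ∧ RegEpisCoeqOfKernelStar (extClass P N)) ↔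
      ReflGraphsStarPi0On P N :=
  ⟨fun ⟨hK, hstar⟩ => reflGraphsStarPi0On_of_regEpisCoeqOfKernelStar hC hP.1 hN hK hstar,
    fun hpi => ⟨hasNKernels_extClass hC hP.1 hN hwk,
      regEpisCoeqOfKernelStar_of_reflGraphsStarPi0On hC hP hN hwk hpi⟩⟩

/-- Let (P, N) be a multi-pointed category where P has weak finite limits
and weak N-kernels, and let C be the regular completion of P. Then (C, N^C) is
star-regular iff every internal reflexive graph in (P, N) satisfies (∗π₀). -/
theorem statement14 (hC : IsRegularCat C) (P : Set C) (hP : IsRegularCompletionOf P)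
    (hwfl : HasWeakFiniteLimitsOn P)
    (N : MorClass C) (hN : IsMorIdealOn P N) (hwk : HasWeakKernelsOn P N) :
    (HasNKernels (extClass P N) ∧ RegEpisCoeqOfKernelStar (extClass P N)) ↔
      ReflGraphsStarPi0On P N :=
  statement14_general hC P hP N hN hwk
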